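/- arXiv:2108.08486 — 2 statements merged into one kernel-verified Lean document; each statement's English description precedes it below -/
import Mathlib

section
/- Let g be a positive integer, q = ⌈g²/2⌉ + g, and z = ⌈g²/2⌉. Define the q×q array P by: for j,k ∈ [1:q], P(j,k) = * if j ∈ {<k−z+1>_q, <k−z+2>_q, …, <k>_q}; otherwise j = <k+h>_q for a unique h ∈ [1:g], and P(j,k) = <j−(h−1)(g+2)>_q if 1 ≤ h ≤ ⌈g/2⌉, while P(j,k) = <k−(g−h)(g+2)>_q if ⌈g/2⌉ < h ≤ g. Then P is a g-regular (q, q, z, q) placement delivery array. -/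
/-!
Symbol `s` occupies exactly the `g` cells `(s + e h, s + e h - h)`, `h ∈ [1:g]`, one on each
non-star diagonal `J - K = h`, where `e = rowOffset g`. Hence the array is `g`-regular, and
condition (C3) for two cells of `s` on diagonals `h₁ ≠ h₂` says that `e h₂ - h₂ - e h₁` is
congruent modulo `q` to an element of `[0, z)`. This is an inequality between integers, checked
in four cases according to which of `h₁`, `h₂` exceed `⌈g/2⌉`; it only needs `g² ≤ 2z`.
-/

/-- A `(K,F,Z,S)` placement delivery array: an `F × K` array whose entries are either `*`
(encoded as `none`) or integers in `[1:S]` (encoded as `some s` with `s : Fin S`). -/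
def IsPDA (K F Z S : ℕ) (P : Fin F → Fin K → Option (Fin S)) : Prop :=
  (∀ k : Fin K, (Finset.univ.filter fun j : Fin F => P j k = none).card = Z) ∧
  (∀ s : Fin S, ∃ (j : Fin F) (k : Fin K), P j k = some s) ∧
  (∀ (j1 j2 : Fin F) (k1 k2 : Fin K) (s : Fin S),
      P j1 k1 = some s → P j2 k2 = some s → (j1, k1) ≠ (j2, k2) →
      P j1 k2 = none ∧ P j2 k1 = none)

/-- A PDA is `g`-regular if each integer appears exactly `g` times. -/
def PDARegular (K F S g : ℕ) (P : Fin F → Fin K → Option (Fin S)) : Prop :=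
  ∀ s : Fin S,
    (Finset.univ.filter fun jk : Fin F × Fin K => P jk.1 jk.2 = some s).card = g

/-- Row `i` is a star row for the integer `s`. -/
def PDAStarRow (K F S : ℕ) (P : Fin F → Fin K → Option (Fin S)) (i : Fin F) (s : Fin S) : Prop :=
  ∀ (j : Fin F) (k : Fin K), P j k = some s → P i k = none

/-- Condition 1 with parameter `lam`. -/
def PDACondition1 (K F Z S lam : ℕ) (P : Fin F → Fin K → Option (Fin S)) : Prop :=
  lam ∣ F ∧ lam ∣ Z ∧
  (∀ (j : Fin F) (k : Fin K),
      P j k = none ↔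
        P ⟨j.val % (F / lam), Nat.lt_of_le_of_lt (Nat.mod_le _ _) j.isLt⟩ k = none) ∧
  ∃ φ : Fin S → Fin (F / lam),
    (∀ s : Fin S, PDAStarRow K F S P (Fin.castLE (Nat.div_le_self F lam) (φ s)) s) ∧
    (∀ j : Fin (F / lam), (Finset.univ.filter fun s : Fin S => φ s = j).card * F = lam * S)

/-- Condition 2: every row contains the same number of stars. -/
def PDACondition2 (K F S : ℕ) (P : Fin F → Fin K → Option (Fin S)) : Prop :=
  ∀ j1 j2 : Fin F,
    (Finset.univ.filter fun k : Fin K => P j1 k = none).card =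
    (Finset.univ.filter fun k : Fin K => P j2 k = none).card

/-- `subMod a b q` computes `(a - b) mod q` (the 0-based residue), where the subtraction is
made safe in `ℕ` by first adding the multiple `q * b`. -/
def subMod (a b q : ℕ) : ℕ := (a + q * b - b) % q

/-- In 0-based indices the paper's entries `<j - (h-1)(g+2)>_q` (for `h ≤ ⌈g/2⌉`, i.e.
`2h ≤ g + 1`) and `<k - (g-h)(g+2)>_q` (otherwise) both read `J - rowOffset g h`, as `k = j - h`. -/
def rowOffset (g h : ℤ) : ℤ :=
  if 2 * h ≤ g + 1 then (h - 1) * (g + 2) else (g - h) * (g + 2) + h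

theorem rowOffset_sub_sub_rowOffset_mem {g z h₁ h₂ : ℤ} (hz : g ^ 2 ≤ 2 * z)
    (h₁1 : 1 ≤ h₁) (h₁g : h₁ ≤ g) (h₂1 : 1 ≤ h₂) (h₂g : h₂ ≤ g) (hne : h₁ ≠ h₂) :
    let D := rowOffset g h₂ - h₂ - rowOffset g h₁
    (0 ≤ D ∧ D < z) ∨ (-(z + g) ≤ D ∧ D < -g) := by
  intro D
  -- In the four cases `D` is `(h₂ - h₁)(g + 2) - h₂`, `(h₁ + h₂ - g - 2)(g + 1)`,
  -- `(g + 1 - h₁ - h₂)(g + 2)` and `(h₁ - h₂)(g + 2) - h₁`; this dictates where to split.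
  simp only [D, rowOffset]
  split_ifs with c₂ c₁ c₁
  · rcases hne.lt_or_gt with h | h
    · left; constructor <;> nlinarith
    · right; constructor <;> nlinarith
  · rcases le_or_gt (g + 2) (h₁ + h₂) with h | h
    · left; constructor <;> nlinarith
    · right; constructor <;> nlinarith
  · rcases le_or_gt (h₁ + h₂) (g + 1) with h | h
    · left; constructor <;> nlinarith
    · right; constructor <;> nlinarith
  · rcases hne.lt_or_gt with h | h
    · right; constructor <;> nlinarith
    · left; constructor <;> nlinarith

theorem Fin.add_sub_mod_eq_val_sub {n : ℕ} (a b : Fin n) :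
    (a.val + n - b.val) % n = (a - b).val := by
  rw [Fin.val_sub]
  congr 1
  omega

section OffsetArray

open Finset Fin.CommRing Fin.NatCast Fin.IntCast

variable {q : ℕ}

def offsetArray (z : ℕ) (e : ℕ → Fin q) (J K : Fin q) : Option (Fin q) :=
  if (K - J).val < z then none else some (J - e (J - K).val)

variable {z g : ℕ} {e : ℕ → Fin q}

theorem le_val_neg_iff [NeZero q] (hq : q = z + g) (hz : 0 < z) (x : Fin q) :
    z ≤ (-x).val ↔ x.val ∈ Icc 1 g := by
  rw [Fin.val_neg, mem_Icc]
  split_ifs with hx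
  · rw [hx, Fin.val_zero]
    omega
  · have := Fin.val_ne_zero_iff.mpr hx
    omega

theorem offsetArray_eq_none_iff {J K : Fin q} :
    offsetArray z e J K = none ↔ (K - J).val < z := by
  unfold offsetArray
  split_ifs <;> simp_all

theorem offsetArray_eq_some_iff [NeZero q] (hq : q = z + g) (hz : 0 < z) {J K s : Fin q} :
    offsetArray z e J K = some s ↔ ∃ h ∈ Icc 1 g, J = s + e h ∧ K = J - h := by
  unfold offsetArray
  rw [← neg_sub J K]
  constructor
  · intro hJK
    split_ifs at hJK with hstar
    refine ⟨(J - K).val, (le_val_neg_iff hq hz _).mp (not_lt.mp hstar), ?_, by simp⟩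
    rw [← Option.some_inj.mp hJK]
    ring
  · rintro ⟨h, hh, rfl, rfl⟩
    have hval : (h : Fin q).val = h := Fin.val_cast_of_lt (by grind)
    rw [sub_sub_cancel, if_neg (not_lt.mpr ((le_val_neg_iff hq hz _).mpr (by rwa [hval]))), hval]
    simp

theorem card_filter_offsetArray_eq_none [NeZero q] (hzq : z ≤ q) (K : Fin q) :
    #{J | offsetArray z e J K = none} = z := by
  calc #{J | offsetArray z e J K = none}
      = #{x : Fin q | x.val < z} :=
        card_equiv (Equiv.subLeft K) fun J => by simp [offsetArray_eq_none_iff]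
    _ = z := by rw [Fin.card_filter_val_lt]; omega

theorem card_filter_offsetArray_eq_some [NeZero q] (hq : q = z + g) (hz : 0 < z) (s : Fin q) :
    #{JK : Fin q × Fin q | offsetArray z e JK.1 JK.2 = some s} = g := by
  have hcells : ({JK : Fin q × Fin q | offsetArray z e JK.1 JK.2 = some s} : Finset _) =
      (Icc 1 g).image fun h => (s + e h, s + e h - h) := by
    ext ⟨J, K⟩
    simp only [mem_filter, mem_univ, true_and, mem_image, Prod.mk.injEq,
      offsetArray_eq_some_iff hq hz]
    grind
  rw [hcells, card_image_of_injOn, Nat.card_Icc, Nat.add_sub_cancel]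
  intro h₁ hh₁ h₂ hh₂ hcell
  simp only [Prod.mk.injEq] at hcell
  have hcast : (h₁ : Fin q) = h₂ := by linear_combination hcell.1 - hcell.2
  rw [← Fin.val_cast_of_lt (n := q) (by grind : h₁ < q), hcast, Fin.val_cast_of_lt (by grind)]

theorem offsetArray_eq_none_of_eq_some [NeZero q] (hq : q = z + g) (hz : 0 < z)
    (hsep : ∀ h₁ ∈ Icc 1 g, ∀ h₂ ∈ Icc 1 g, h₁ ≠ h₂ → (e h₂ - h₂ - e h₁).val < z)
    {J₁ J₂ K₁ K₂ s : Fin q} (hs₁ : offsetArray z e J₁ K₁ = some s)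
    (hs₂ : offsetArray z e J₂ K₂ = some s) (hne : (J₁, K₁) ≠ (J₂, K₂)) :
    offsetArray z e J₁ K₂ = none := by
  obtain ⟨h₁, hh₁, rfl, rfl⟩ := (offsetArray_eq_some_iff hq hz).mp hs₁
  obtain ⟨h₂, hh₂, rfl, rfl⟩ := (offsetArray_eq_some_iff hq hz).mp hs₂
  have hh : h₁ ≠ h₂ := by rintro rfl; exact hne rfl
  rw [offsetArray_eq_none_iff]
  convert hsep h₁ hh₁ h₂ hh₂ hh using 2
  ring

theorem isPDA_and_pdaRegular_offsetArray [NeZero q] (hq : q = z + g) (hz : 0 < z) (hg : 0 < g)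
    (hsep : ∀ h₁ ∈ Icc 1 g, ∀ h₂ ∈ Icc 1 g, h₁ ≠ h₂ → (e h₂ - h₂ - e h₁).val < z) :
    IsPDA q q z q (offsetArray z e) ∧ PDARegular q q q g (offsetArray z e) := by
  refine ⟨⟨card_filter_offsetArray_eq_none (by omega), fun s => ?_, ?_⟩,
    card_filter_offsetArray_eq_some hq hz⟩
  · exact ⟨_, _, (offsetArray_eq_some_iff hq hz).mpr ⟨1, mem_Icc.mpr ⟨le_rfl, hg⟩, rfl, rfl⟩⟩
  · intro J₁ J₂ K₁ K₂ s hs₁ hs₂ hne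
    exact ⟨offsetArray_eq_none_of_eq_some hq hz hsep hs₁ hs₂ hne,
      offsetArray_eq_none_of_eq_some hq hz hsep hs₂ hs₁ hne.symm⟩

end OffsetArray

section Construction3

open Finset Fin.CommRing Fin.NatCast Fin.IntCast

variable {q : ℕ} [NeZero q]

theorem subMod_eq_val_sub (a b : ℕ) : subMod a b q = ((a : Fin q) - b).val := by
  have hb : b ≤ a + q * b := le_add_left (Nat.le_mul_of_pos_left b (NeZero.pos q))
  rw [subMod, ← Fin.val_natCast, Nat.cast_sub hb, Nat.cast_add, Nat.cast_mul, Fin.natCast_self,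
    zero_mul, add_zero]

variable {g z : ℕ}

theorem val_rowOffset_sub_sub_rowOffset_lt (hq : q = z + g) (hz : g ^ 2 ≤ 2 * z)
    {h₁ h₂ : ℕ} (hh₁ : h₁ ∈ Icc 1 g) (hh₂ : h₂ ∈ Icc 1 g) (hne : h₁ ≠ h₂) :
    ((rowOffset g h₂ : Fin q) - h₂ - rowOffset g h₁).val < z := by
  rw [mem_Icc] at hh₁ hh₂
  set D := rowOffset g h₂ - h₂ - rowOffset g h₁ with hD
  have hmem : (0 ≤ D ∧ D < z) ∨ (-(z + g) ≤ D ∧ D < -g) :=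
    rowOffset_sub_sub_rowOffset_mem (by exact_mod_cast hz) (by exact_mod_cast hh₁.1)
      (by exact_mod_cast hh₁.2) (by exact_mod_cast hh₂.1) (by exact_mod_cast hh₂.2)
      (by exact_mod_cast hne)
  have hcast : (rowOffset g h₂ : Fin q) - h₂ - rowOffset g h₁ = (D : Fin q) := by
    rw [hD]
    push_cast
    ring
  obtain ⟨r, hr0, hrz, hr⟩ : ∃ r : ℤ, 0 ≤ r ∧ r < z ∧ D % q = r := by
    rcases hmem with ⟨h0, hlt⟩ | ⟨h0, hlt⟩
    · exact ⟨D, h0, hlt, Int.emod_eq_of_lt h0 (by omega)⟩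
    · refine ⟨D + q, by omega, by omega, ?_⟩
      rw [← Int.add_emod_right, Int.emod_eq_of_lt (by omega) (by omega)]
  rw [hcast, Fin.val_intCast, hr]
  omega

theorem construction3_eq_offsetArray (hq : q = z + g) (hz : 0 < z)
    (P : Fin q → Fin q → Option (Fin q))
    (hP : ∀ J K : Fin q, P J K =
      if (K.val + q - J.val) % q < z then none
      else if (J.val + q - K.val) % q ≤ (g + 1) / 2 then
        some ⟨subMod J.val (((J.val + q - K.val) % q - 1) * (g + 2)) q,
          Nat.mod_lt _ (NeZero.pos q)⟩
      else
        some ⟨subMod K.val ((g - (J.val + q - K.val) % q) * (g + 2)) q,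
          Nat.mod_lt _ (NeZero.pos q)⟩) :
    P = offsetArray z fun h => (rowOffset g h : Fin q) := by
  funext J K
  rw [hP, Fin.add_sub_mod_eq_val_sub, Fin.add_sub_mod_eq_val_sub, offsetArray]
  split_ifs with hstar hlow
  · rfl
  all_goals
    obtain ⟨hpos, hle⟩ := mem_Icc.mp <| (le_val_neg_iff hq hz (J - K)).mp <| by
      rw [neg_sub]; omega
    refine congrArg some (Fin.ext ?_)
    dsimp only
    rw [subMod_eq_val_sub, rowOffset]
    congr 1
  · rw [if_pos (by omega)]
    push_cast [hpos]
    ring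
  · rw [if_neg (by omega)]
    push_cast [hle]
    ring

end Construction3

/-- Indices are 0-based: the paper's cell `(j,k)` with `j,k ∈ [1:q]` corresponds to
`(J,K) = (j-1,k-1)`; the paper's entry `j ∈ [k-z+1 : k]_q` becomes `(K + q - J) % q < z`; the
unique `h` with `j = <k+h>_q` is `h = (J + q - K) % q`; the 0-based value of `<x>_q` is
`<x>_q - 1`, computed via `subMod`. -/
theorem pda_construction3 (g c q z : ℕ) (hg : 0 < g)
    (hc : c = (g ^ 2 + 1) / 2) (hq : q = c + g) (hz : z = c)
    (P : Fin q → Fin q → Option (Fin q))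
    (hP : ∀ J K : Fin q, P J K =
      if (K.val + q - J.val) % q < z then none
      else if (J.val + q - K.val) % q ≤ (g + 1) / 2 then
        some ⟨subMod J.val (((J.val + q - K.val) % q - 1) * (g + 2)) q,
          by simp only [subMod]; exact Nat.mod_lt _ (by omega)⟩
      else
        some ⟨subMod K.val ((g - (J.val + q - K.val) % q) * (g + 2)) q,
          by simp only [subMod]; exact Nat.mod_lt _ (by omega)⟩) :
    IsPDA q q z q P ∧ PDARegular q q q g P := by
  have hqz : q = z + g := by omega
  have hg2 : 0 < g ^ 2 := by positivity
  have hz0 : 0 < z := by omega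
  have hz2 : g ^ 2 ≤ 2 * z := by omega
  have : NeZero q := ⟨by omega⟩
  rw [construction3_eq_offsetArray hqz hz0 P hP]
  exact isPDA_and_pdaRegular_offsetArray hqz hz0 hg fun h₁ hh₁ h₂ hh₂ hne =>
    val_rowOffset_sub_sub_rowOffset_lt hqz hz2 hh₁ hh₂ hne
end

section
/- Let q and z be positive integers with z < q. Let P be the array whose rows are indexed by the z-element subsets T of [1:q] and whose columns are indexed by k ∈ [1:q], with P(T,k) = * if k ∈ T and P(T,k) = T∪{k} (a (z+1)-element subset of [1:q]) if k ∉ T. Then: each column of P contains exactly binomial(q−1,z−1) stars; exactly binomial(q,z+1) distinct non-star values occur in P, and each occurs exactly z+1 times; whenever two distinct cells carry the same non-star value, they lie in different rows and different columns and the entries of P at the two crossing positions are both *; moreover every row of P contains exactly z stars. Hence P is a (z+1)-regular (q, binomial(q,z), binomial(q−1,z−1), binomial(q,z+1)) placement delivery array satisfying Condition 2. -/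
/-- the Maddah-Ali–Niesen array. Rows are the `z`-subsets `T` of `[1:q]`,
columns are `k ∈ [1:q]`, with `P(T,k) = *` if `k ∈ T` and `P(T,k) = T ∪ {k}` otherwise.
It is a `(z+1)`-regular `(q, C(q,z), C(q-1,z-1), C(q,z+1))` PDA satisfying Condition 2. -/
theorem MN_PDA (q z : ℕ) (hz : 0 < z) (hzq : z < q)
    (P : {T : Finset (Fin q) // T.card = z} → Fin q → Option (Finset (Fin q)))
    (hP : ∀ (T : {T : Finset (Fin q) // T.card = z}) (k : Fin q),
        P T k = if k ∈ T.1 then none else some (insert k T.1)) :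
    -- C1: each column contains exactly `C(q-1, z-1)` stars
    (∀ k : Fin q,
        (Finset.univ.filter fun T : {T : Finset (Fin q) // T.card = z} =>
          P T k = none).card = (q - 1).choose (z - 1)) ∧
    -- exactly `C(q, z+1)` distinct non-star values occur
    ((Finset.univ.filter fun v : Finset (Fin q) =>
        ∃ T k, P T k = some v).card = q.choose (z + 1)) ∧
    -- each occurring non-star value occurs exactly `z+1` times
    (∀ v : Finset (Fin q), (∃ T k, P T k = some v) →
        (Finset.univ.filter fun Tk : {T : Finset (Fin q) // T.card = z} × Fin q =>
          P Tk.1 Tk.2 = some v).card = z + 1) ∧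
    -- C3: equal non-star values lie in different rows/columns and the crossing entries are stars
    (∀ (T1 T2 : {T : Finset (Fin q) // T.card = z}) (k1 k2 : Fin q) (v : Finset (Fin q)),
        P T1 k1 = some v → P T2 k2 = some v → (T1, k1) ≠ (T2, k2) →
        T1 ≠ T2 ∧ k1 ≠ k2 ∧ P T1 k2 = none ∧ P T2 k1 = none) ∧
    -- Condition 2: every row contains exactly `z` stars
    (∀ T : {T : Finset (Fin q) // T.card = z},
        (Finset.univ.filter fun k : Fin q => P T k = none).card = z) := by
  have key : ∀ (T : {T : Finset (Fin q) // T.card = z}) (k : Fin q) (v : Finset (Fin q)),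
      P T k = some v ↔ (k ∉ T.1 ∧ insert k T.1 = v) := by
    intro T k v
    rw [hP]
    split_ifs with h <;> simp [h]
  have keyn : ∀ (T : {T : Finset (Fin q) // T.card = z}) (k : Fin q),
      P T k = none ↔ k ∈ T.1 := by
    intro T k
    rw [hP]
    split_ifs with h <;> simp [h]
  -- characterization of occurring values
  have occ : ∀ v : Finset (Fin q), (∃ T k, P T k = some v) ↔ v.card = z + 1 := by
    intro v
    constructor
    · rintro ⟨T, k, h⟩
      rw [key] at h
      obtain ⟨hk, hv⟩ := h
      rw [← hv, Finset.card_insert_of_notMem hk, T.2]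
    · intro hv
      have hne : v.Nonempty := by
        rw [← Finset.card_pos, hv]; omega
      obtain ⟨k, hk⟩ := hne
      have hcard : (v.erase k).card = z := by
        rw [Finset.card_erase_of_mem hk, hv]; omega
      refine ⟨⟨v.erase k, hcard⟩, k, ?_⟩
      rw [key]
      exact ⟨Finset.notMem_erase _ _, Finset.insert_erase hk⟩
  refine ⟨?_, ?_, ?_, ?_, ?_⟩
  · -- C1
    intro k
    have h1 : (Finset.univ.filter fun T : {T : Finset (Fin q) // T.card = z} => P T k = none)
        = Finset.univ.filter fun T => k ∈ T.1 := by
      ext T; simp [keyn]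
    have h2 : ((Finset.univ.erase k).powersetCard (z - 1)).card = (q - 1).choose (z - 1) := by
      rw [Finset.card_powersetCard, Finset.card_erase_of_mem (Finset.mem_univ k),
        Finset.card_univ, Fintype.card_fin]
    rw [h1, ← h2]
    apply Finset.card_bij (fun T _ => T.1.erase k)
    · intro T hT
      simp only [Finset.mem_filter, Finset.mem_univ, true_and] at hT
      rw [Finset.mem_powersetCard]
      exact ⟨Finset.erase_subset_erase _ (Finset.subset_univ _),
        by rw [Finset.card_erase_of_mem hT, T.2]⟩
    · intro T1 h1' T2 h2' heq
      simp only [Finset.mem_filter, Finset.mem_univ, true_and] at h1' h2'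
      apply Subtype.ext
      rw [← Finset.insert_erase h1', ← Finset.insert_erase h2', heq]
    · intro s hs
      rw [Finset.mem_powersetCard] at hs
      obtain ⟨hsub, hcard⟩ := hs
      have hks : k ∉ s := fun h => Finset.notMem_erase k Finset.univ (hsub h)
      have hc : (insert k s).card = z := by
        rw [Finset.card_insert_of_notMem hks, hcard]; omega
      refine ⟨⟨insert k s, hc⟩, ?_, ?_⟩
      · simp [Finset.mem_insert_self]
      · simp [Finset.erase_insert hks]
  · -- number of distinct values
    have h1 : (Finset.univ.filter fun v : Finset (Fin q) => ∃ T k, P T k = some v)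
        = Finset.univ.powersetCard (z + 1) := by
      ext v
      simp [occ, Finset.mem_powersetCard, Finset.subset_univ]
    rw [h1, Finset.card_powersetCard, Finset.card_univ, Fintype.card_fin]
  · -- regularity
    intro v hv
    have hvc : v.card = z + 1 := (occ v).mp hv
    rw [← hvc]
    apply Finset.card_bij (fun Tk _ => Tk.2)
    · intro Tk hTk
      simp only [Finset.mem_filter, Finset.mem_univ, true_and] at hTk
      rw [key] at hTk
      rw [← hTk.2]
      exact Finset.mem_insert_self _ _
    · rintro ⟨T1, k1⟩ h1' ⟨T2, k2⟩ h2' heq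
      simp only at heq
      subst heq
      simp only [Finset.mem_filter, Finset.mem_univ, true_and, key] at h1' h2'
      have : T1.1 = T2.1 := by
        rw [← Finset.erase_insert h1'.1, ← Finset.erase_insert h2'.1, h1'.2, h2'.2]
      simp [Subtype.ext this]
    · intro k hk
      have hcard : (v.erase k).card = z := by
        rw [Finset.card_erase_of_mem hk, hvc]; omega
      refine ⟨(⟨v.erase k, hcard⟩, k), ?_, rfl⟩
      simp only [Finset.mem_filter, Finset.mem_univ, true_and, key]
      exact ⟨Finset.notMem_erase _ _, Finset.insert_erase hk⟩
  · -- C3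
    intro T1 T2 k1 k2 v h1 h2 hne
    rw [key] at h1 h2
    obtain ⟨hk1, hv1⟩ := h1
    obtain ⟨hk2, hv2⟩ := h2
    have hTT : T1 ≠ T2 := by
      rintro rfl
      apply hne
      have hkv : k1 ∈ insert k2 T1.1 := by rw [hv2, ← hv1]; exact Finset.mem_insert_self _ _
      rcases Finset.mem_insert.mp hkv with h | h
      · rw [h]
      · exact absurd h hk1
    have hkk : k1 ≠ k2 := by
      rintro rfl
      apply hTT
      apply Subtype.ext
      rw [← Finset.erase_insert hk1, ← Finset.erase_insert hk2, hv1, hv2]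
    have hmem1 : k2 ∈ T1.1 := by
      have : k2 ∈ insert k1 T1.1 := by rw [hv1, ← hv2]; exact Finset.mem_insert_self _ _
      rcases Finset.mem_insert.mp this with h | h
      · exact absurd h.symm hkk
      · exact h
    have hmem2 : k1 ∈ T2.1 := by
      have : k1 ∈ insert k2 T2.1 := by rw [hv2, ← hv1]; exact Finset.mem_insert_self _ _
      rcases Finset.mem_insert.mp this with h | h
      · exact absurd h hkk
      · exact h
    exact ⟨hTT, hkk, (keyn _ _).mpr hmem1, (keyn _ _).mpr hmem2⟩
  · -- Condition 2
    intro T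
    have h1 : (Finset.univ.filter fun k : Fin q => P T k = none) = T.1 := by
      ext k; simp [keyn]
    rw [h1, T.2]
end
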